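/- arXiv:1505.00059 — 3 statements merged into one kernel-verified Lean document; each statement's English description precedes it below -/
import Mathlib

section
/- Let r : D → ℝᵐ be continuously differentiable on an open convex set D ⊆ ℝⁿ with Jacobian J(θ), and assume: J is Lipschitz continuous on D with constant γ (‖J(φ) − J(θ)‖ ≤ γ‖φ − θ‖ for all φ, θ ∈ D); ‖J(θ)‖ ≤ α for all θ ∈ D; there is a point θ* ∈ D with J(θ*)ᵀ r(θ*) = 0; the smallest eigenvalue λ of J(θ*)ᵀJ(θ*) is positive; and there is a constant η < λ with ‖(J(θ) − J(θ*))ᵀ r(θ*)‖ ≤ η‖θ − θ*‖ for all θ ∈ D. Then there exist ε > 0 and ρ < 1 such that for every starting point θ₀ with ‖θ₀ − θ*‖ < ε, the Gauss–Newton iterates θ_{k+1} = θ_k − (J(θ_k)ᵀJ(θ_k))⁻¹ J(θ_k)ᵀ r(θ_k) are well defined (each J(θ_k)ᵀJ(θ_k) is invertible), satisfy ‖θ_{k+1} − θ*‖ ≤ ρ‖θ_k − θ*‖ for all k, and hence converge to θ*. -/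
open RealInnerProductSpace

lemma gn_unit_of_coercive {n : ℕ}
    (G : EuclideanSpace ℝ (Fin n) →L[ℝ] EuclideanSpace ℝ (Fin n)) (c : ℝ) (hc : 0 < c)
    (h : ∀ v, c * ‖v‖ ≤ ‖G v‖) :
    IsUnit G ∧ ∀ w, ‖(Ring.inverse G) w‖ ≤ c⁻¹ * ‖w‖ := by
  have hinj : Function.Injective G := by
    intro a b hab
    have h1 := h (a - b)
    rw [map_sub, hab, sub_self, norm_zero] at h1
    have h2 : ‖a - b‖ = 0 := le_antisymm (by nlinarith) (norm_nonneg _)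
    exact sub_eq_zero.mp (norm_eq_zero.mp h2)
  have hsurj : Function.Surjective (G.toLinearMap) :=
    LinearMap.injective_iff_surjective.mp hinj
  let e : EuclideanSpace ℝ (Fin n) ≃ₗ[ℝ] EuclideanSpace ℝ (Fin n) :=
    LinearEquiv.ofBijective G.toLinearMap ⟨hinj, hsurj⟩
  have hu : IsUnit G := ⟨e.toContinuousLinearEquiv.toUnit, by ext x; rfl⟩
  refine ⟨hu, fun w => ?_⟩
  have hGi : G ((Ring.inverse G) w) = w := by
    have h3 : G * (Ring.inverse G) = 1 := Ring.mul_inverse_cancel G hu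
    calc G ((Ring.inverse G) w) = (G * (Ring.inverse G)) w := rfl
    _ = w := by rw [h3]; rfl
  have h4 := h ((Ring.inverse G) w)
  rw [hGi] at h4
  rw [inv_mul_eq_div, le_div_iff₀ hc, mul_comm]
  exact h4

set_option maxHeartbeats 1000000 in
/-- One step of Gauss-Newton: invertibility and contraction. -/
lemma gn_key {n m : ℕ} (D : Set (EuclideanSpace ℝ (Fin n)))
    (r : EuclideanSpace ℝ (Fin n) → EuclideanSpace ℝ (Fin m))
    (J : EuclideanSpace ℝ (Fin n) →
      (EuclideanSpace ℝ (Fin n) →L[ℝ] EuclideanSpace ℝ (Fin m)))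
    (hJ : ∀ θ ∈ D, HasFDerivAt r (J θ) θ)
    (γ' : ℝ) (hγ' : 0 ≤ γ') (hLip : ∀ φ ∈ D, ∀ θ ∈ D, ‖J φ - J θ‖ ≤ γ' * ‖φ - θ‖)
    (α : ℝ) (hα : 0 ≤ α) (hbound : ∀ θ ∈ D, ‖J θ‖ ≤ α)
    (θstar : EuclideanSpace ℝ (Fin n)) (hθstar : θstar ∈ D)
    (hcrit : ContinuousLinearMap.adjoint (J θstar) (r θstar) = 0)
    (lam : ℝ)
    (hlam_min : ∀ v : EuclideanSpace ℝ (Fin n),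
      lam * ‖v‖ ^ 2 ≤ ⟪((ContinuousLinearMap.adjoint (J θstar)).comp (J θstar)) v, v⟫)
    (η' : ℝ)
    (hηbound : ∀ θ ∈ D,
      ‖ContinuousLinearMap.adjoint (J θ - J θstar) (r θstar)‖ ≤ η' * ‖θ - θstar‖)
    (δ₀ : ℝ) (hδ₀sub : Metric.ball θstar δ₀ ⊆ D)
    (δ : ℝ) (hδδ₀ : δ ≤ δ₀) (hc : 0 < lam - 2 * α * γ' * δ)
    (θ : EuclideanSpace ℝ (Fin n)) (hθδ : ‖θ - θstar‖ < δ) :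
    IsUnit ((ContinuousLinearMap.adjoint (J θ)).comp (J θ)) ∧
    ‖(θ - (Ring.inverse ((ContinuousLinearMap.adjoint (J θ)).comp (J θ)))
        (ContinuousLinearMap.adjoint (J θ) (r θ))) - θstar‖
      ≤ ((2 * α * γ' * δ + η') / (lam - 2 * α * γ' * δ)) * ‖θ - θstar‖ := by
  have ht0 : 0 ≤ ‖θ - θstar‖ := norm_nonneg _
  have hsubD : Metric.closedBall θstar ‖θ - θstar‖ ⊆ D := by
    intro x hx
    apply hδ₀sub
    rw [Metric.mem_closedBall] at hx
    rw [Metric.mem_ball]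
    calc dist x θstar ≤ ‖θ - θstar‖ := hx
      _ < δ := hθδ
      _ ≤ δ₀ := hδδ₀
  have hθmem : θ ∈ Metric.closedBall θstar ‖θ - θstar‖ := by
    rw [Metric.mem_closedBall, dist_eq_norm]
  have hθsmem : θstar ∈ Metric.closedBall θstar ‖θ - θstar‖ :=
    Metric.mem_closedBall_self ht0
  have hθD : θ ∈ D := hsubD hθmem
  have hnJ : ‖J θ‖ ≤ α := hbound θ hθD
  have hnJs : ‖J θstar‖ ≤ α := hbound θstar hθstar
  have hLipθ : ‖J θ - J θstar‖ ≤ γ' * ‖θ - θstar‖ := hLip θ hθD θstar hθstar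
  set c : ℝ := lam - 2 * α * γ' * δ with hcdef
  have hsplit : (ContinuousLinearMap.adjoint (J θ)).comp (J θ)
      - (ContinuousLinearMap.adjoint (J θstar)).comp (J θstar)
      = (ContinuousLinearMap.adjoint (J θ)).comp (J θ - J θstar)
        + (ContinuousLinearMap.adjoint (J θ - J θstar)).comp (J θstar) := by
    refine ContinuousLinearMap.ext fun v => ?_
    simp only [ContinuousLinearMap.add_apply, ContinuousLinearMap.sub_apply,
      ContinuousLinearMap.comp_apply, map_sub]
    abel
  have hGA : ‖(ContinuousLinearMap.adjoint (J θ)).comp (J θ)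
      - (ContinuousLinearMap.adjoint (J θstar)).comp (J θstar)‖
      ≤ 2 * α * γ' * ‖θ - θstar‖ := by
    rw [hsplit]
    refine (norm_add_le _ _).trans ?_
    have h1 : ‖(ContinuousLinearMap.adjoint (J θ)).comp (J θ - J θstar)‖
        ≤ ‖ContinuousLinearMap.adjoint (J θ)‖ * ‖J θ - J θstar‖ :=
      ContinuousLinearMap.opNorm_comp_le _ _
    have h2 : ‖(ContinuousLinearMap.adjoint (J θ - J θstar)).comp (J θstar)‖
        ≤ ‖ContinuousLinearMap.adjoint (J θ - J θstar)‖ * ‖J θstar‖ :=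
      ContinuousLinearMap.opNorm_comp_le _ _
    rw [ContinuousLinearMap.adjoint.norm_map] at h1 h2
    nlinarith [norm_nonneg (J θ - J θstar), norm_nonneg (J θ)]
  have hGAδ : ‖(ContinuousLinearMap.adjoint (J θ)).comp (J θ)
      - (ContinuousLinearMap.adjoint (J θstar)).comp (J θstar)‖ ≤ 2 * α * γ' * δ :=
    hGA.trans (mul_le_mul_of_nonneg_left hθδ.le (by positivity))
  have hcoer : ∀ v, c * ‖v‖ ≤ ‖((ContinuousLinearMap.adjoint (J θ)).comp (J θ)) v‖ := by
    intro v
    rcases eq_or_ne v 0 with rfl | hv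
    · simp
    · have hvpos : 0 < ‖v‖ := norm_pos_iff.mpr hv
      have hAv := hlam_min v
      set B := (ContinuousLinearMap.adjoint (J θ)).comp (J θ)
        - (ContinuousLinearMap.adjoint (J θstar)).comp (J θstar) with hBdef
      have hdiff : |⟪B v, v⟫| ≤ ‖B‖ * ‖v‖ * ‖v‖ :=
        (abs_real_inner_le_norm _ _).trans
          (mul_le_mul_of_nonneg_right (B.le_opNorm v) (norm_nonneg _))
      have hdiff' : -(‖B‖ * ‖v‖ * ‖v‖) ≤ ⟪B v, v⟫ := neg_le_of_abs_le hdiff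
      have hGv : ⟪((ContinuousLinearMap.adjoint (J θ)).comp (J θ)) v, v⟫
          = ⟪((ContinuousLinearMap.adjoint (J θstar)).comp (J θstar)) v, v⟫ + ⟪B v, v⟫ := by
        rw [← inner_add_left]
        congr 1
        simp [hBdef, ContinuousLinearMap.sub_apply]
      have hCS : ⟪((ContinuousLinearMap.adjoint (J θ)).comp (J θ)) v, v⟫
          ≤ ‖((ContinuousLinearMap.adjoint (J θ)).comp (J θ)) v‖ * ‖v‖ :=
        real_inner_le_norm _ _
      have hquad : (c * ‖v‖) * ‖v‖
          ≤ ‖((ContinuousLinearMap.adjoint (J θ)).comp (J θ)) v‖ * ‖v‖ := by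
        nlinarith [sq_nonneg ‖v‖]
      exact le_of_mul_le_mul_right hquad hvpos
  obtain ⟨hu, hinvb⟩ :=
    gn_unit_of_coercive ((ContinuousLinearMap.adjoint (J θ)).comp (J θ)) c hc hcoer
  refine ⟨hu, ?_⟩
  have hmvt : ‖r θ - r θstar - (J θ) (θ - θstar)‖
      ≤ (2 * γ' * ‖θ - θstar‖) * ‖θ - θstar‖ := by
    apply Convex.norm_image_sub_le_of_norm_hasFDerivWithin_le'
      (fun x hx => (hJ x (hsubD hx)).hasFDerivWithinAt)
      (fun x hx => ?_) (convex_closedBall _ _) hθsmem hθmem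
    have h5 : ‖x - θ‖ ≤ ‖x - θstar‖ + ‖θstar - θ‖ := norm_sub_le_norm_sub_add_norm_sub _ _ _
    have h6 : ‖x - θstar‖ ≤ ‖θ - θstar‖ := by
      rw [Metric.mem_closedBall, dist_eq_norm] at hx; exact hx
    have h7 : ‖θstar - θ‖ = ‖θ - θstar‖ := norm_sub_rev _ _
    have h8 := hLip x (hsubD hx) θ hθD
    nlinarith
  have hηb : ‖(ContinuousLinearMap.adjoint (J θ - J θstar)) (r θstar)‖
      ≤ η' * ‖θ - θstar‖ := hηbound θ hθD
  have hGeq : ((ContinuousLinearMap.adjoint (J θ)).comp (J θ)) (θ - θstar)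
      - (ContinuousLinearMap.adjoint (J θ)) (r θ)
      = -((ContinuousLinearMap.adjoint (J θ)) (r θ - r θstar - (J θ) (θ - θstar)))
        - (ContinuousLinearMap.adjoint (J θ - J θstar)) (r θstar) := by
    simp only [map_sub, ContinuousLinearMap.sub_apply, ContinuousLinearMap.comp_apply,
      hcrit]
    abel
  have hnorm1 : ‖((ContinuousLinearMap.adjoint (J θ)).comp (J θ)) (θ - θstar)
      - (ContinuousLinearMap.adjoint (J θ)) (r θ)‖
      ≤ (2 * α * γ' * δ + η') * ‖θ - θstar‖ := by
    rw [hGeq]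
    have h9 : ‖(ContinuousLinearMap.adjoint (J θ)) (r θ - r θstar - (J θ) (θ - θstar))‖
        ≤ α * ((2 * γ' * ‖θ - θstar‖) * ‖θ - θstar‖) := by
      refine (ContinuousLinearMap.le_opNorm _ _).trans ?_
      rw [ContinuousLinearMap.adjoint.norm_map]
      exact mul_le_mul hnJ hmvt (norm_nonneg _) hα
    refine (norm_sub_le _ _).trans ?_
    rw [norm_neg]
    have h10 : 2 * α * γ' * ‖θ - θstar‖ * ‖θ - θstar‖ ≤ 2 * α * γ' * δ * ‖θ - θstar‖ := by
      nlinarith [mul_nonneg (mul_nonneg hα hγ') ht0]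
    linarith
  have hid : (Ring.inverse ((ContinuousLinearMap.adjoint (J θ)).comp (J θ)))
      (((ContinuousLinearMap.adjoint (J θ)).comp (J θ)) (θ - θstar)) = θ - θstar := by
    have h3 : (Ring.inverse ((ContinuousLinearMap.adjoint (J θ)).comp (J θ)))
        * ((ContinuousLinearMap.adjoint (J θ)).comp (J θ)) = 1 :=
      Ring.inverse_mul_cancel _ hu
    have h4 := DFunLike.congr_fun h3 (θ - θstar)
    simpa [ContinuousLinearMap.mul_apply, ContinuousLinearMap.one_apply] using h4
  have hrw : θ - (Ring.inverse ((ContinuousLinearMap.adjoint (J θ)).comp (J θ)))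
      ((ContinuousLinearMap.adjoint (J θ)) (r θ)) - θstar
      = (Ring.inverse ((ContinuousLinearMap.adjoint (J θ)).comp (J θ)))
        (((ContinuousLinearMap.adjoint (J θ)).comp (J θ)) (θ - θstar)
          - (ContinuousLinearMap.adjoint (J θ)) (r θ)) := by
    rw [map_sub, hid]
    abel
  rw [hrw]
  refine (hinvb _).trans ?_
  refine (mul_le_mul_of_nonneg_left hnorm1 (by positivity)).trans_eq ?_
  rw [div_eq_inv_mul]
  ring

/-- Local convergence of the Gauss–Newton method.  `r : D → ℝᵐ` is differentiable on the
open convex set `D ⊆ ℝⁿ` with Jacobian `J` which is Lipschitz with constant `γ` and bounded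
by `α` on `D`; `θ*` is a critical point (`J(θ*)ᵀ r(θ*) = 0`); the smallest eigenvalue `λ`
of `J(θ*)ᵀJ(θ*)` is positive; and `‖(J(θ) − J(θ*))ᵀ r(θ*)‖ ≤ η‖θ − θ*‖` on `D` with
`η < λ`.  Then there are `ε > 0` and `ρ < 1` such that for any starting point within `ε`
of `θ*`, the Gauss–Newton iterates are well defined (each `J(θₖ)ᵀJ(θₖ)` is invertible),
contract towards `θ*` with factor `ρ`, and converge to `θ*`. -/
theorem stmt_3 {n m : ℕ} (D : Set (EuclideanSpace ℝ (Fin n)))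
    (hD_open : IsOpen D) (hD_conv : Convex ℝ D)
    (r : EuclideanSpace ℝ (Fin n) → EuclideanSpace ℝ (Fin m))
    (J : EuclideanSpace ℝ (Fin n) →
      (EuclideanSpace ℝ (Fin n) →L[ℝ] EuclideanSpace ℝ (Fin m)))
    (hJ : ∀ θ ∈ D, HasFDerivAt r (J θ) θ)
    (γ : ℝ) (hLip : ∀ φ ∈ D, ∀ θ ∈ D, ‖J φ - J θ‖ ≤ γ * ‖φ - θ‖)
    (α : ℝ) (hbound : ∀ θ ∈ D, ‖J θ‖ ≤ α)
    (θstar : EuclideanSpace ℝ (Fin n)) (hθstar : θstar ∈ D)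
    (hcrit : ContinuousLinearMap.adjoint (J θstar) (r θstar) = 0)
    (lam : ℝ) (hlam_pos : 0 < lam)
    (hlam_eig : ∃ v : EuclideanSpace ℝ (Fin n), v ≠ 0 ∧
      ((ContinuousLinearMap.adjoint (J θstar)).comp (J θstar)) v = lam • v)
    (hlam_min : ∀ v : EuclideanSpace ℝ (Fin n),
      lam * ‖v‖ ^ 2 ≤ ⟪((ContinuousLinearMap.adjoint (J θstar)).comp (J θstar)) v, v⟫)
    (η : ℝ) (hη : η < lam)
    (hηbound : ∀ θ ∈ D,
      ‖ContinuousLinearMap.adjoint (J θ - J θstar) (r θstar)‖ ≤ η * ‖θ - θstar‖) :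
    ∃ ε > (0 : ℝ), ∃ ρ < (1 : ℝ),
      ∀ θseq : ℕ → EuclideanSpace ℝ (Fin n), ‖θseq 0 - θstar‖ < ε →
        (∀ k : ℕ, θseq (k + 1) = θseq k -
          (Ring.inverse ((ContinuousLinearMap.adjoint (J (θseq k))).comp (J (θseq k))))
            (ContinuousLinearMap.adjoint (J (θseq k)) (r (θseq k)))) →
        (∀ k : ℕ, IsUnit ((ContinuousLinearMap.adjoint (J (θseq k))).comp (J (θseq k)))) ∧
        (∀ k : ℕ, ‖θseq (k + 1) - θstar‖ ≤ ρ * ‖θseq k - θstar‖) ∧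
        Filter.Tendsto θseq Filter.atTop (nhds θstar) := by
  have hα : 0 ≤ α := le_trans (norm_nonneg _) (hbound θstar hθstar)
  set γ' := max γ 0 with hγ'def
  have hγ' : 0 ≤ γ' := le_max_right _ _
  have hLip' : ∀ φ ∈ D, ∀ θ ∈ D, ‖J φ - J θ‖ ≤ γ' * ‖φ - θ‖ := fun φ hφ θ hθ =>
    (hLip φ hφ θ hθ).trans (mul_le_mul_of_nonneg_right (le_max_left _ _) (norm_nonneg _))
  set η' := max η 0 with hη'def
  have hη'0 : 0 ≤ η' := le_max_right _ _
  have hη'lam : η' < lam := max_lt hη hlam_pos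
  have hηbound' : ∀ θ ∈ D,
      ‖ContinuousLinearMap.adjoint (J θ - J θstar) (r θstar)‖ ≤ η' * ‖θ - θstar‖ :=
    fun θ hθ => (hηbound θ hθ).trans
      (mul_le_mul_of_nonneg_right (le_max_left _ _) (norm_nonneg _))
  obtain ⟨δ₀, hδ₀pos, hδ₀sub⟩ := Metric.isOpen_iff.mp hD_open θstar hθstar
  set K := 2 * α * γ' with hKdef
  have hK : 0 ≤ K := by positivity
  set δ := min δ₀ ((lam - η') / (2 * (K + 1))) with hδdef
  have hδpos : 0 < δ :=
    lt_min hδ₀pos (div_pos (by linarith) (by linarith))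
  have hδδ₀ : δ ≤ δ₀ := min_le_left _ _
  have h2Kδ : 2 * K * δ < lam - η' := by
    have hd2 : δ ≤ (lam - η') / (2 * (K + 1)) := min_le_right _ _
    have h1 : 2 * K * δ ≤ 2 * K * ((lam - η') / (2 * (K + 1))) :=
      mul_le_mul_of_nonneg_left hd2 (by linarith)
    have heq : 2 * K * ((lam - η') / (2 * (K + 1))) = (lam - η') * (2 * K / (2 * (K + 1))) := by
      ring
    have hfrac : 2 * K / (2 * (K + 1)) < 1 := (div_lt_one (by linarith)).mpr (by linarith)
    have h2 : 2 * K * ((lam - η') / (2 * (K + 1))) < lam - η' := by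
      rw [heq]
      nlinarith
    linarith
  have hKδ0 : 0 ≤ K * δ := mul_nonneg hK hδpos.le
  have hc : 0 < lam - K * δ := by linarith
  set ρ := (K * δ + η') / (lam - K * δ) with hρdef
  have hρ0 : 0 ≤ ρ := div_nonneg (by linarith) hc.le
  have hρ1 : ρ < 1 := (div_lt_one hc).mpr (by linarith)
  have hc' : 0 < lam - 2 * α * γ' * δ := by rw [hKdef] at hc; exact hc
  have key := fun (θ : EuclideanSpace ℝ (Fin n)) (hθ : ‖θ - θstar‖ < δ) =>
    gn_key D r J hJ γ' hγ' hLip' α hα hbound θstar hθstar hcrit lam hlam_min η' hηbound'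
      δ₀ hδ₀sub δ hδδ₀ hc' θ hθ
  have hρeq : (2 * α * γ' * δ + η') / (lam - 2 * α * γ' * δ) = ρ := by
    rw [hρdef, hKdef]
  refine ⟨δ, hδpos, ρ, hρ1, fun θseq h0 hrec => ?_⟩
  have hall : ∀ k, ‖θseq k - θstar‖ < δ := by
    intro k
    induction k with
    | zero => exact h0
    | succ k ih =>
      have hk := (key (θseq k) ih).2
      rw [← hrec k, hρeq] at hk
      calc ‖θseq (k + 1) - θstar‖ ≤ ρ * ‖θseq k - θstar‖ := hk
        _ ≤ ‖θseq k - θstar‖ := mul_le_of_le_one_left (norm_nonneg _) hρ1.le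
        _ < δ := ih
  have hcontr : ∀ k, ‖θseq (k + 1) - θstar‖ ≤ ρ * ‖θseq k - θstar‖ := by
    intro k
    have hk := (key (θseq k) (hall k)).2
    rw [← hrec k, hρeq] at hk
    exact hk
  refine ⟨fun k => (key (θseq k) (hall k)).1, hcontr, ?_⟩
  have hgeo : ∀ k, ‖θseq k - θstar‖ ≤ ρ ^ k * ‖θseq 0 - θstar‖ := by
    intro k
    induction k with
    | zero => simp
    | succ k ih =>
      calc ‖θseq (k + 1) - θstar‖ ≤ ρ * ‖θseq k - θstar‖ := hcontr k
        _ ≤ ρ * (ρ ^ k * ‖θseq 0 - θstar‖) := mul_le_mul_of_nonneg_left ih hρ0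
        _ = ρ ^ (k + 1) * ‖θseq 0 - θstar‖ := by ring
  have hlim : Filter.Tendsto (fun k => ρ ^ k * ‖θseq 0 - θstar‖) Filter.atTop (nhds 0) := by
    simpa using (tendsto_pow_atTop_nhds_zero_of_lt_one hρ0 hρ1).mul_const ‖θseq 0 - θstar‖
  have hz := squeeze_zero (fun k => norm_nonneg _) hgeo hlim
  exact tendsto_iff_norm_sub_tendsto_zero.mpr hz
end

section
/- Let r : ℝⁿ → ℝᵐ with Jacobian J, let θ_k and θ* be points, write J_k = J(θ_k), r_k = r(θ_k), r* = r(θ*), and let θ_{k+1} = θ_k − (J_kᵀJ_k)⁻¹ J_kᵀ r_k. Suppose: J_kᵀJ_k is invertible with ‖(J_kᵀJ_k)⁻¹‖ ≤ c/λ for constants c, λ > 0; ‖J_k‖ ≤ α; ‖J_kᵀ r*‖ ≤ η‖θ_k − θ*‖; and ‖r* − r_k − J_k(θ* − θ_k)‖ ≤ (γ/2)‖θ_k − θ*‖². Then ‖θ_{k+1} − θ*‖ ≤ (c/λ)( η‖θ_k − θ*‖ + (αγ/2)‖θ_k − θ*‖² ). -/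
/-- Norm estimate for one Gauss–Newton step: if `‖(JₖᵀJₖ)⁻¹‖ ≤ c/λ`, `‖Jₖ‖ ≤ α`,
`‖Jₖᵀ r*‖ ≤ η‖θₖ − θ*‖` and `‖r* − rₖ − Jₖ(θ* − θₖ)‖ ≤ (γ/2)‖θₖ − θ*‖²`, then
`‖θ_{k+1} − θ*‖ ≤ (c/λ)(η‖θₖ − θ*‖ + (αγ/2)‖θₖ − θ*‖²)`. -/
theorem stmt_5 {n m : ℕ}
    (r : EuclideanSpace ℝ (Fin n) → EuclideanSpace ℝ (Fin m))
    (J : EuclideanSpace ℝ (Fin n) →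
      (EuclideanSpace ℝ (Fin n) →L[ℝ] EuclideanSpace ℝ (Fin m)))
    (θk θstar : EuclideanSpace ℝ (Fin n))
    (Jk : EuclideanSpace ℝ (Fin n) →L[ℝ] EuclideanSpace ℝ (Fin m)) (hJk : Jk = J θk)
    (rk rstar : EuclideanSpace ℝ (Fin m)) (hrk : rk = r θk) (hrstar : rstar = r θstar)
    (θk1 : EuclideanSpace ℝ (Fin n))
    (hstep : θk1 = θk - (Ring.inverse ((ContinuousLinearMap.adjoint Jk).comp Jk))
      (ContinuousLinearMap.adjoint Jk rk))
    (c lam α η γ : ℝ) (hc : 0 < c) (hlam : 0 < lam)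
    (hinv : IsUnit ((ContinuousLinearMap.adjoint Jk).comp Jk))
    (hinv_norm : ‖Ring.inverse ((ContinuousLinearMap.adjoint Jk).comp Jk)‖ ≤ c / lam)
    (hα : ‖Jk‖ ≤ α)
    (hη : ‖ContinuousLinearMap.adjoint Jk rstar‖ ≤ η * ‖θk - θstar‖)
    (hγ : ‖rstar - rk - Jk (θstar - θk)‖ ≤ γ / 2 * ‖θk - θstar‖ ^ 2) :
    ‖θk1 - θstar‖ ≤ c / lam *
      (η * ‖θk - θstar‖ + α * γ / 2 * ‖θk - θstar‖ ^ 2) := by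
  set M := (ContinuousLinearMap.adjoint Jk).comp Jk with hM
  set Minv := Ring.inverse M with hMinv
  have hcancel : Minv.comp M = ContinuousLinearMap.id ℝ _ := Ring.inverse_mul_cancel M hinv
  have hid : ∀ x, Minv (M x) = x := by
    intro x
    have := congrArg (fun (T : EuclideanSpace ℝ (Fin n) →L[ℝ] EuclideanSpace ℝ (Fin n)) => T x) hcancel
    simpa using this
  have key : θk1 - θstar =
      Minv ((ContinuousLinearMap.adjoint Jk) (rstar - rk - Jk (θstar - θk)))
        - Minv ((ContinuousLinearMap.adjoint Jk) rstar) := by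
    have h1 : (ContinuousLinearMap.adjoint Jk) (rstar - rk - Jk (θstar - θk))
        - (ContinuousLinearMap.adjoint Jk) rstar
        = M (θk - θstar) - (ContinuousLinearMap.adjoint Jk) rk := by
      simp only [hM, ContinuousLinearMap.comp_apply, map_sub]
      abel
    rw [← map_sub, h1, map_sub, hid, hstep]
    abel
  rw [key]
  have hd : (0:ℝ) ≤ ‖θk - θstar‖ := norm_nonneg _
  have hclam : (0:ℝ) ≤ c / lam := le_of_lt (div_pos hc hlam)
  have t1 : ‖Minv ((ContinuousLinearMap.adjoint Jk) (rstar - rk - Jk (θstar - θk)))‖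
      ≤ c / lam * (α * γ / 2 * ‖θk - θstar‖ ^ 2) := by
    have h1 : ‖(ContinuousLinearMap.adjoint Jk) (rstar - rk - Jk (θstar - θk))‖
        ≤ α * (γ / 2 * ‖θk - θstar‖ ^ 2) := by
      calc ‖(ContinuousLinearMap.adjoint Jk) (rstar - rk - Jk (θstar - θk))‖
          ≤ ‖ContinuousLinearMap.adjoint Jk‖ * ‖rstar - rk - Jk (θstar - θk)‖ :=
            ContinuousLinearMap.le_opNorm _ _
        _ ≤ α * (γ / 2 * ‖θk - θstar‖ ^ 2) := by
            rw [show ‖ContinuousLinearMap.adjoint Jk‖ = ‖Jk‖ from LinearIsometryEquiv.norm_map _ Jk]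
            exact mul_le_mul hα hγ (norm_nonneg _) ((norm_nonneg Jk).trans hα)
    calc ‖Minv ((ContinuousLinearMap.adjoint Jk) (rstar - rk - Jk (θstar - θk)))‖
        ≤ ‖Minv‖ * ‖(ContinuousLinearMap.adjoint Jk) (rstar - rk - Jk (θstar - θk))‖ :=
          ContinuousLinearMap.le_opNorm _ _
      _ ≤ c / lam * (α * (γ / 2 * ‖θk - θstar‖ ^ 2)) :=
          mul_le_mul hinv_norm h1 (norm_nonneg _) hclam
      _ = c / lam * (α * γ / 2 * ‖θk - θstar‖ ^ 2) := by ring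
  have t2 : ‖Minv ((ContinuousLinearMap.adjoint Jk) rstar)‖
      ≤ c / lam * (η * ‖θk - θstar‖) := by
    calc ‖Minv ((ContinuousLinearMap.adjoint Jk) rstar)‖
        ≤ ‖Minv‖ * ‖(ContinuousLinearMap.adjoint Jk) rstar‖ :=
          ContinuousLinearMap.le_opNorm _ _
      _ ≤ c / lam * (η * ‖θk - θstar‖) := mul_le_mul hinv_norm hη (norm_nonneg _) hclam
  calc ‖_ - _‖ ≤ ‖Minv ((ContinuousLinearMap.adjoint Jk) (rstar - rk - Jk (θstar - θk)))‖
        + ‖Minv ((ContinuousLinearMap.adjoint Jk) rstar)‖ := norm_sub_le _ _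
    _ ≤ c / lam * (α * γ / 2 * ‖θk - θstar‖ ^ 2) + c / lam * (η * ‖θk - θstar‖) :=
        add_le_add t1 t2
    _ = c / lam * (η * ‖θk - θstar‖ + α * γ / 2 * ‖θk - θstar‖ ^ 2) := by ring
end

section
/- (Independence of optimal parameters.) Let H be a symmetric positive definite n×n real matrix and let i ∈ {1, …, n} be any index. Then there exists an invertible n×n real matrix Γ such that Γ H Γᵀ is a diagonal matrix and the change of variables φ = (Γᵀ)⁻¹θ fixes the i-th coordinate: for every θ ∈ ℝⁿ, ((Γᵀ)⁻¹ θ)_i = θ_i. -/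
/-! Order the coordinates so that `i` comes last and apply Gram–Schmidt, for the inner product
`⟨x, y⟩ = xᵀ H y`, to the standard basis: this is the LDL decomposition `G H Gᵀ = D` with `G`
unit lower triangular. Since `i` is last, the `i`-th column of `G` is `eᵢ`, so `Gᵀ` and hence
`(Gᵀ)⁻¹` leave the `i`-th coordinate unchanged. -/

open Matrix
open scoped ComplexOrder

namespace InnerProductSpace

variable {𝕜 E F ι : Type*} [RCLike 𝕜] [NormedAddCommGroup E] [InnerProductSpace 𝕜 E]
  [AddCommGroup F] [Module 𝕜 F] [LinearOrder ι] [LocallyFiniteOrderBot ι] [WellFoundedLT ι]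

theorem map_gramSchmidt_eq_of_forall_lt (u : ι → E) (f : E →ₗ[𝕜] F) {k : ι}
    (hf : ∀ j < k, f (u j) = 0) : f (gramSchmidt 𝕜 u k) = f (u k) := by
  have hspan : Submodule.span 𝕜 (u '' Set.Iio k) ≤ LinearMap.ker f := by
    rw [Submodule.span_le]
    rintro _ ⟨j, hj, rfl⟩
    exact hf j hj
  rw [gramSchmidt_def, map_sub, map_sum, sub_eq_self]
  refine Finset.sum_eq_zero fun j hj => hspan ?_
  rw [← span_gramSchmidt_Iio 𝕜 u k]
  refine Submodule.span_mono ?_ (Submodule.starProjection_apply_mem _ _)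
  exact Set.singleton_subset_iff.2 ⟨j, Finset.mem_Iio.1 hj, rfl⟩

end InnerProductSpace

namespace LDL

variable {𝕜 ι : Type*} [RCLike 𝕜] [LinearOrder ι] [WellFoundedLT ι] [LocallyFiniteOrderBot ι]
  [Fintype ι] {S : Matrix ι ι 𝕜} (hS : S.PosDef)

theorem lowerInv_apply_self (k : ι) : lowerInv hS k k = 1 := by
  let := Sᵀ.toNormedAddCommGroup hS.transpose
  let := Sᵀ.toInnerProductSpace hS.transpose.posSemidef
  simpa [lowerInv] using
    InnerProductSpace.map_gramSchmidt_eq_of_forall_lt (𝕜 := 𝕜) (F := 𝕜) (k := k)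
      (Pi.basisFun 𝕜 ι) (LinearMap.proj k) fun j hj => by simp [hj.ne]

theorem conjTranspose_lowerInv_apply_of_isTop {i : ι} (hi : IsTop i) :
    (lowerInv hS)ᴴ i = Pi.single i 1 := by
  ext k
  rcases (hi k).eq_or_lt with rfl | hk
  · simp [lowerInv_apply_self]
  · simp [lowerInv_triangular hS hk, hk.ne]

end LDL

namespace Matrix

theorem inv_mulVec_apply_of_row_eq_single {m R : Type*} [Fintype m] [DecidableEq m] [CommRing R]
    {A : Matrix m m R} (hA : IsUnit A) {i : m} (hrow : A i = Pi.single i 1) (θ : m → R) :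
    (A⁻¹ *ᵥ θ) i = θ i := by
  calc (A⁻¹ *ᵥ θ) i = A i ⬝ᵥ (A⁻¹ *ᵥ θ) := by rw [hrow, single_one_dotProduct]
    _ = (A *ᵥ (A⁻¹ *ᵥ θ)) i := rfl
    _ = θ i := by
      rw [mulVec_mulVec, mul_nonsing_inv A ((isUnit_iff_isUnit_det A).1 hA), one_mulVec]

theorem PosDef.exists_isDiag_conj_conjTranspose_row_eq_single {𝕜 : Type*} [RCLike 𝕜] {n : ℕ}
    {S : Matrix (Fin n) (Fin n) 𝕜} (hS : S.PosDef) (i : Fin n) :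
    ∃ G : Matrix (Fin n) (Fin n) 𝕜, IsUnit G ∧ (G * S * Gᴴ).IsDiag ∧ Gᴴ i = Pi.single i 1 := by
  obtain ⟨m, rfl⟩ := Nat.exists_eq_succ_of_ne_zero i.pos.ne'
  set σ := Equiv.swap i (Fin.last m)
  have hS' : (S.submatrix σ.symm σ.symm).PosDef := hS.submatrix σ.symm.injective
  set L := LDL.lowerInv hS'
  refine ⟨L.submatrix σ σ, (isUnit_submatrix_equiv σ σ).2 (isUnit_of_invertible L), ?_, ?_⟩
  · have hLdiag : (L * S.submatrix σ.symm σ.symm * Lᴴ).IsDiag := by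
      rw [← LDL.diag_eq_lowerInv_conj]
      exact isDiag_diagonal _
    have hSσ : S = (S.submatrix σ.symm σ.symm).submatrix σ σ := by simp
    rw [hSσ, conjTranspose_submatrix, submatrix_mul_equiv, submatrix_mul_equiv]
    exact hLdiag.submatrix σ.injective
  · have hσi : σ i = Fin.last m := Equiv.swap_apply_left _ _
    ext k
    rw [conjTranspose_submatrix, submatrix_apply, hσi,
      LDL.conjTranspose_lowerInv_apply_of_isTop hS' Fin.le_last, ← hσi]
    simp [Pi.single_apply]

end Matrix

theorem stmt_8_general {n : ℕ} (H : Matrix (Fin n) (Fin n) ℝ)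
    (hpd : H.PosDef) (i : Fin n) :
    ∃ G : Matrix (Fin n) (Fin n) ℝ, IsUnit G ∧ (G * H * Gᵀ).IsDiag ∧
      ∀ θ : Fin n → ℝ, (Gᵀ)⁻¹.mulVec θ i = θ i := by
  obtain ⟨G, hG, hdiag, hrow⟩ := hpd.exists_isDiag_conj_conjTranspose_row_eq_single i
  rw [conjTranspose_eq_transpose_of_trivial] at hdiag hrow
  exact ⟨G, hG, hdiag, inv_mulVec_apply_of_row_eq_single ((isUnit_transpose G).2 hG) hrow⟩

/-- Independence of optimal parameters: for a symmetric positive definite `H` and any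
index `i`, there is an invertible `G` (the `Γ` of the paper) such that `G H Gᵀ` is
diagonal and the change of variables `φ = (Gᵀ)⁻¹ θ` fixes the `i`-th coordinate. -/
theorem stmt_8 {n : ℕ} (H : Matrix (Fin n) (Fin n) ℝ)
    (hsym : H.IsSymm) (hpd : H.PosDef) (i : Fin n) :
    ∃ G : Matrix (Fin n) (Fin n) ℝ, IsUnit G ∧ (G * H * Gᵀ).IsDiag ∧
      ∀ θ : Fin n → ℝ, (Gᵀ)⁻¹.mulVec θ i = θ i :=
  stmt_8_general H hpd i
end
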